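/- Suppose 0 < β < 1/(2N+1). For m ∈ {1, 2}, let t = (t_0, t_1, …, t_m) where t_0 = 0 and t_j = (1-β)/N · Σ_{k=1}^{j} β^{-k} for 1 ≤ j ≤ m. Then Γ_t = ⋃_{j=0}^m (Γ + t_j) is a self-similar set. -/

import Mathlib

noncomputable section

namespace HSCantor

/-- A `D`-coding of `x`: a digit sequence `c` with digits in `D ⊆ ℤ` such that
`x = (1-β)/N · Σ_{k=1}^∞ c_k β^{k-1}` (here indexed from `k = 0`). -/
def IsCoding (N : ℕ) (β : ℝ) (D : Set ℤ) (x : ℝ) (c : ℕ → ℤ) : Prop :=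
  (∀ k, c k ∈ D) ∧ x = (1 - β) / N * ∑' k : ℕ, (c k : ℝ) * β ^ k

/-- The set `Γ_{β,D}` for a digit set `D ⊆ ℤ`. -/
def cantorD (N : ℕ) (β : ℝ) (D : Set ℤ) : Set ℝ := { x | ∃ c, IsCoding N β D x c }

/-- The homogeneous symmetric Cantor set `Γ = Γ_{β,{0,1,…,N}}`. -/
def Gamma (N : ℕ) (β : ℝ) : Set ℝ := cantorD N β (Set.Icc 0 (N : ℤ))

/-- `E ⊆ ℝ` is a self-similar set: it is nonempty, compact, and is the union of its
images under finitely many contracting similitudes `x ↦ r x + b`, `0 < |r| < 1`. -/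
def IsSelfSimilar (E : Set ℝ) : Prop :=
  E.Nonempty ∧ IsCompact E ∧ ∃ F : Finset (ℝ × ℝ),
    (∀ p ∈ F, 0 < |p.1| ∧ |p.1| < 1) ∧
    E = ⋃ p ∈ F, (fun x => p.1 * x + p.2) '' E

/-- `Γ_t = ⋃_{j=0}^m (Γ + t_j)`. -/
def GammaT (N : ℕ) (β : ℝ) {m : ℕ} (t : Fin (m + 1) → ℝ) : Set ℝ :=
  ⋃ j, (fun x => x + t j) '' Gamma N β

/-- The set `T = ⋃_{n≥1} { (1-β)/N · Σ_{k=1}^n j_k β^{-k} : j_k ∈ {0,…,N} }`. -/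
def Tset (N : ℕ) (β : ℝ) : Set ℝ :=
  { x | ∃ n : ℕ, 1 ≤ n ∧ ∃ c : ℕ → ℕ, (∀ k, c k ≤ N) ∧
      x = (1 - β) / N * ∑ k ∈ Finset.Icc 1 n, (c k : ℝ) * β ^ (-(k : ℤ)) }

/-- `d` is a digit representation of the translation vector `t` with `τ` digits:
`t_j = (1-β)/N · Σ_{k=1}^τ d_{j,k} β^{-k}` with all digits in `{0,…,N}`. -/
def IsDigitRep (N : ℕ) (β : ℝ) {m : ℕ} (t : Fin (m + 1) → ℝ) (τ : ℕ)
    (d : Fin (m + 1) → ℕ → ℕ) : Prop :=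
  (∀ j k, d j k ≤ N) ∧
    ∀ j, t j = (1 - β) / N * ∑ k ∈ Finset.Icc 1 τ, (d j k : ℝ) * β ^ (-(k : ℤ))

/-- `d` is a digit representation of `t` with `τ = τ_t` digits, `τ_t` minimal. -/
def IsMinimalRep (N : ℕ) (β : ℝ) {m : ℕ} (t : Fin (m + 1) → ℝ) (τ : ℕ)
    (d : Fin (m + 1) → ℕ → ℕ) : Prop :=
  IsDigitRep N β t τ d ∧ ∀ τ' < τ, ∀ d', ¬ IsDigitRep N β t τ' d'

/-- `s_k = max_{0 ≤ j ≤ m} t_{j,k}`. -/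
def digitSup {m : ℕ} (d : Fin (m + 1) → ℕ → ℕ) (k : ℕ) : ℕ :=
  Finset.univ.sup fun j => d j k

/-- Words of length `n` over the alphabet `{0,1,…,N}`, as lists of naturals. -/
def Words (N n : ℕ) : Set (List ℕ) := { w | w.length = n ∧ ∀ x ∈ w, x ≤ N }

/-- `Ω_t^n`: words `i_1 … i_n ∈ {0,…,N}^n` with `i_{n+1-k} ≤ N - s_k` for `1 ≤ k ≤ τ`.
(A list `w = [i_1, …, i_n]` satisfies `i_{n+1-k} = w.getD (n-k) 0`.) -/
def Omega (N τ : ℕ) (s : ℕ → ℕ) (n : ℕ) : Set (List ℕ) :=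
  { w | w ∈ Words N n ∧ ∀ k, 1 ≤ k → k ≤ τ → w.getD (n - k) 0 + s k ≤ N }

/-- `Ω̂_t^n`: words `i_1 … i_n ∈ {0,…,N}^n` with `i_{n+1-k} ≥ s_k` for `1 ≤ k ≤ τ`. -/
def OmegaHat (N τ : ℕ) (s : ℕ → ℕ) (n : ℕ) : Set (List ℕ) :=
  { w | w ∈ Words N n ∧ ∀ k, 1 ≤ k → k ≤ τ → s k ≤ w.getD (n - k) 0 }

/-- `W_t^τ = A_t^τ ∪ Â_t^τ`: words obtained from a word in `Ω_t^τ` (resp. `Ω̂_t^τ`)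
by adding (resp. subtracting) the digits of some `t_j` to the last `τ` positions. -/
def Wset (N : ℕ) {m : ℕ} (τ : ℕ) (d : Fin (m + 1) → ℕ → ℕ) : Set (List ℕ) :=
  { v | ∃ w ∈ Omega N τ (digitSup d) τ, ∃ j : Fin (m + 1),
      v = List.ofFn fun idx : Fin τ => w.getD idx 0 + d j (τ - (idx : ℕ)) } ∪
  { v | ∃ w ∈ OmegaHat N τ (digitSup d) τ, ∃ j : Fin (m + 1),
      v = List.ofFn fun idx : Fin τ => w.getD idx 0 - d j (τ - (idx : ℕ)) }

/-- The symbolic admissibility condition: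
`⋃_{n=τ}^ℓ {0,…,N}^{n-τ} × W_t^τ × {0,…,N}^{ℓ-n} = {0,…,N}^ℓ` for some `ℓ ≥ τ`. -/
def AdmissibleWith (N : ℕ) {m : ℕ} (τ : ℕ) (d : Fin (m + 1) → ℕ → ℕ) : Prop :=
  ∃ ℓ, τ ≤ ℓ ∧
    (⋃ n ∈ Finset.Icc τ ℓ,
      { z : List ℕ | ∃ u ∈ Words N (n - τ), ∃ w ∈ Wset N τ d, ∃ v ∈ Words N (ℓ - n),
          z = u ++ w ++ v }) = Words N ℓ

/-- `t` is an admissible translation vector. -/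
def IsAdmissible (N : ℕ) (β : ℝ) {m : ℕ} (t : Fin (m + 1) → ℝ) : Prop :=
  (∀ j, t j ∈ Tset N β) ∧
    ∃ τ d, IsMinimalRep N β t τ d ∧ AdmissibleWith N τ d

/-- The vertex set `V_t = {0,…,N}^τ \ W_t^τ` of the directed graph `G_t`. -/
def Vset (N : ℕ) {m : ℕ} (τ : ℕ) (d : Fin (m + 1) → ℕ → ℕ) : Set (List ℕ) :=
  Words N τ \ Wset N τ d

/-- The graph on `V` with an edge `i → j` iff `i_2 … i_τ = j_1 … j_{τ-1}` has a cycle: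
a directed path of positive length starting and ending at the same vertex. -/
def HasCycle (V : Set (List ℕ)) : Prop :=
  ∃ (L : ℕ) (p : ℕ → List ℕ), 0 < L ∧ (∀ i ≤ L, p i ∈ V) ∧
    (∀ i < L, (p i).drop 1 = (p (i + 1)).dropLast) ∧ p 0 = p L

open Classical in
/-- The adjacency matrix of the directed graph `G_t`, indexed by all words of length `τ`
over `{0,…,N}`; its `(i,j)` entry is `1` exactly when `i, j ∈ V_t` and there is a
directed edge `i → j`, and the rows and columns outside `V_t` are zero. -/
def adjMat (N τ : ℕ) (V : Set (List ℕ)) :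
    Matrix (Fin τ → Fin (N + 1)) (Fin τ → Fin (N + 1)) ℕ :=
  fun i j =>
    if (List.ofFn fun k => (i k : ℕ)) ∈ V ∧ (List.ofFn fun k => (j k : ℕ)) ∈ V ∧
        (List.ofFn fun k => (i k : ℕ)).drop 1 = (List.ofFn fun k => (j k : ℕ)).dropLast
    then 1 else 0

/-- `φ_i(x) = βx + i(1-β)/N`. -/
def phi (N : ℕ) (β : ℝ) (i : ℕ) (x : ℝ) : ℝ := β * x + i * (1 - β) / N

/-- `φ_{i_1 … i_n} = φ_{i_1} ∘ ⋯ ∘ φ_{i_n}`. -/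
def phiWord (N : ℕ) (β : ℝ) (w : List ℕ) (x : ℝ) : ℝ := w.foldr (phi N β) x

/-- The conjugate translation vector `t̂_j = t_m - t_{m-j}`. -/
def conj {m : ℕ} (t : Fin (m + 1) → ℝ) : Fin (m + 1) → ℝ :=
  fun j => t (Fin.last m) - t ⟨m - (j : ℕ), Nat.lt_succ_of_le (Nat.sub_le m j)⟩

def vl (N : ℕ) (β : ℝ) (d : ℕ → ℕ) : ℝ := (1 - β) / N * ∑' k : ℕ, (d k : ℝ) * β ^ k

lemma mem_Gamma_iff {N : ℕ} {β : ℝ} {x : ℝ} :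
    x ∈ Gamma N β ↔ ∃ d : ℕ → ℕ, (∀ k, d k ≤ N) ∧ x = vl N β d := by
  constructor
  · rintro ⟨c, hc, hx⟩
    refine ⟨fun k => (c k).toNat, fun k => ?_, ?_⟩
    · have := hc k; rw [Set.mem_Icc] at this
      show (c k).toNat ≤ N; omega
    · rw [hx]; unfold vl; congr 1; apply tsum_congr; intro k
      have := hc k; rw [Set.mem_Icc] at this
      congr 1
      rw [show ((c k).toNat : ℝ) = (((c k).toNat : ℤ) : ℝ) by push_cast; ring]
      rw [Int.toNat_of_nonneg this.1]
  · rintro ⟨d, hd, rfl⟩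
    refine ⟨fun k => (d k : ℤ), fun k => Set.mem_Icc.2 ⟨Int.ofNat_nonneg _, by show ((d k : ℤ)) ≤ N; exact_mod_cast hd k⟩, ?_⟩
    unfold vl; push_cast; rfl

lemma summable_digits {N : ℕ} {β : ℝ} (hβ0 : 0 ≤ β) (hβ1 : β < 1) (d : ℕ → ℕ)
    (hd : ∀ k, d k ≤ N) : Summable (fun k => (d k : ℝ) * β ^ k) := by
  refine Summable.of_nonneg_of_le (fun k => by positivity)
    (fun k => mul_le_mul_of_nonneg_right (by exact_mod_cast hd k) (by positivity))
    ((summable_geometric_of_lt_one hβ0 hβ1).mul_left (N : ℝ))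

lemma tsum_shift {N : ℕ} {β : ℝ} (hβ0 : 0 ≤ β) (hβ1 : β < 1) (d : ℕ → ℕ)
    (hd : ∀ k, d k ≤ N) :
    ∑' k : ℕ, (d k : ℝ) * β ^ k = d 0 + β * ∑' k : ℕ, (d (k + 1) : ℝ) * β ^ k := by
  rw [Summable.tsum_eq_zero_add (summable_digits hβ0 hβ1 d hd)]
  simp only [pow_zero, mul_one]
  congr 1
  rw [← tsum_mul_left]
  apply tsum_congr; intro k; rw [pow_succ]; ring


lemma prepend {N : ℕ} {β : ℝ} (hβ0 : 0 ≤ β) (hβ1 : β < 1) {y : ℝ}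
    (hy : y ∈ Gamma N β) {i : ℕ} (hi : i ≤ N) :
    β * y + i * ((1 - β) / N) ∈ Gamma N β := by
  obtain ⟨d, hd, rfl⟩ := mem_Gamma_iff.1 hy
  set d' : ℕ → ℕ := fun k => Nat.casesOn k i d with hd'
  have hd'b : ∀ k, d' k ≤ N := by intro k; cases k with
    | zero => exact hi
    | succ n => exact hd n
  refine mem_Gamma_iff.2 ⟨d', hd'b, ?_⟩
  have h := tsum_shift hβ0 hβ1 d' hd'b
  unfold vl
  rw [h]
  have : d' 0 = i := rfl
  rw [this]
  have h2 : (fun k => ((d' (k+1) : ℕ) : ℝ) * β ^ k) = fun k => ((d k : ℕ) : ℝ) * β ^ k := rfl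
  rw [h2]; ring

lemma split_mem {N : ℕ} {β : ℝ} (hβ0 : 0 ≤ β) (hβ1 : β < 1) {x : ℝ}
    (hx : x ∈ Gamma N β) :
    ∃ i ≤ N, ∃ y ∈ Gamma N β, x = β * y + i * ((1 - β) / N) := by
  obtain ⟨d, hd, rfl⟩ := mem_Gamma_iff.1 hx
  refine ⟨d 0, hd 0, vl N β (fun k => d (k + 1)),
    mem_Gamma_iff.2 ⟨_, fun k => hd (k + 1), rfl⟩, ?_⟩
  unfold vl
  rw [tsum_shift hβ0 hβ1 d hd]; ring

lemma reflect {N : ℕ} (hN : 0 < N) {β : ℝ} (hβ0 : 0 ≤ β) (hβ1 : β < 1) {x : ℝ}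
    (hx : x ∈ Gamma N β) : 1 - x ∈ Gamma N β := by
  obtain ⟨d, hd, rfl⟩ := mem_Gamma_iff.1 hx
  refine mem_Gamma_iff.2 ⟨fun k => N - d k, fun k => Nat.sub_le _ _, ?_⟩
  unfold vl
  have hcast : (fun k => ((N - d k : ℕ) : ℝ) * β ^ k)
      = fun k => (N : ℝ) * β ^ k - (d k : ℝ) * β ^ k := by
    funext k
    rw [Nat.cast_sub (hd k)]; ring
  rw [hcast, Summable.tsum_sub (((summable_geometric_of_lt_one hβ0 hβ1).mul_left (N : ℝ)))
    (summable_digits hβ0 hβ1 d hd)]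
  rw [tsum_mul_left, tsum_geometric_of_lt_one hβ0 hβ1]
  have hN' : (N : ℝ) ≠ 0 := Nat.cast_ne_zero.2 hN.ne'
  have hβ1' : (1 : ℝ) - β ≠ 0 := by linarith
  field_simp

lemma zero_mem {N : ℕ} {β : ℝ} : (0 : ℝ) ∈ Gamma N β := by
  refine mem_Gamma_iff.2 ⟨fun _ => 0, fun _ => Nat.zero_le _, ?_⟩
  unfold vl; simp

lemma isCompact_Gamma {N : ℕ} {β : ℝ} (hβ0 : 0 ≤ β) (hβ1 : β < 1) :
    IsCompact (Gamma N β) := by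
  have hrange : Gamma N β
      = Set.range (fun c : ℕ → Fin (N + 1) => vl N β (fun k => (c k : ℕ))) := by
    ext x; rw [mem_Gamma_iff]
    constructor
    · rintro ⟨d, hd, rfl⟩
      exact ⟨fun k => ⟨d k, Nat.lt_succ_of_le (hd k)⟩, rfl⟩
    · rintro ⟨cf, rfl⟩
      exact ⟨fun k => (cf k : ℕ), fun k => Nat.lt_succ_iff.1 (cf k).isLt, rfl⟩
  rw [hrange]
  apply isCompact_range
  unfold vl
  refine Continuous.mul continuous_const ?_
  refine continuous_tsum (fun k => ?_)
    ((summable_geometric_of_lt_one hβ0 hβ1).mul_left (N : ℝ)) (fun k cf => ?_)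
  · show Continuous fun cf : ℕ → Fin (N + 1) => ((cf k : ℕ) : ℝ) * β ^ k
    have h1 : Continuous fun v : Fin (N + 1) => ((v : ℕ) : ℝ) := continuous_of_discreteTopology
    exact (h1.comp (continuous_apply k)).mul continuous_const
  · have h1 : ((cf k : ℕ) : ℝ) ≤ (N : ℝ) := by
      exact_mod_cast Nat.lt_succ_iff.1 (cf k).isLt
    have h2 : (0:ℝ) ≤ β ^ k := by positivity
    rw [Real.norm_eq_abs, abs_of_nonneg (by positivity)]
    exact mul_le_mul_of_nonneg_right h1 h2


lemma mem_target {F : Finset (ℝ × ℝ)} {E : Set ℝ} {r b z x : ℝ}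
    (hp : (r, b) ∈ F) (hz : z ∈ E) (hx : r * z + b = x) :
    x ∈ ⋃ p ∈ F, (fun x => p.1 * x + p.2) '' E :=
  Set.mem_iUnion₂.2 ⟨(r, b), hp, ⟨z, hz, hx⟩⟩

/-- Suppose `0 < β < 1/(2N+1)`. For `m ∈ {1, 2}`, let `t_0 = 0` and
`t_j = (1-β)/N · Σ_{k=1}^j β^{-k}` for `1 ≤ j ≤ m`. Then `Γ_t = ⋃_{j=0}^m (Γ + t_j)`
is a self-similar set. -/
theorem stmt18 (N : ℕ) (hN : 0 < N) (β : ℝ) (hβ0 : 0 < β) (hβ1 : β < 1 / (2 * N + 1))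
    (m : ℕ) (hm : m = 1 ∨ m = 2) :
    IsSelfSimilar (GammaT N β (fun j : Fin (m + 1) =>
      (1 - β) / N * ∑ k ∈ Finset.Icc 1 (j : ℕ), β ^ (-(k : ℤ)))) := by
  have hNR : (0:ℝ) < N := by exact_mod_cast hN
  have hN1 : (1:ℕ) ≤ N := hN
  have hβ1' : β < 1 := by
    have h1 : (0:ℝ) < 2*N+1 := by positivity
    have h2 : 1/(2*(N:ℝ)+1) ≤ 1 := by rw [div_le_one h1]; linarith
    linarith
  have hβ0' : (0:ℝ) ≤ β := hβ0.le
  have hβne : β ≠ 0 := hβ0.ne'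
  generalize hts : (fun j : Fin (m+1) => (1-β)/(N:ℝ) * ∑ k ∈ Finset.Icc 1 ((j:ℕ)), β ^ (-(k:ℤ))) = t
  have memE : ∀ x : ℝ, x ∈ GammaT N β t ↔ ∃ j, ∃ y ∈ Gamma N β, y + t j = x := by
    intro x
    simp only [GammaT, Set.mem_iUnion, Set.mem_image]
  refine ⟨⟨0 + t 0, (memE _).2 ⟨0, 0, zero_mem, rfl⟩⟩, ?_, ?_⟩
  · exact isCompact_iUnion
      (fun j => (isCompact_Gamma hβ0' hβ1').image (by continuity))
  rcases hm with rfl | rfl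
  · -- m = 1
    have h0 : t 0 = 0 := by rw [← hts]; simp
    have h1 : β * t 1 = (1-β)/N := by
      rw [← hts]
      have e : ((1 : Fin (1+1)) : ℕ) = 1 := rfl
      simp only [e]
      rw [show Finset.Icc 1 1 = {1} from Finset.Icc_self 1, Finset.sum_singleton,
        show β ^ (-(1:ℕ) : ℤ) = β⁻¹ by norm_num]
      field_simp
    refine ⟨Finset.image (fun q : Fin 2 × Fin N =>
      ((β : ℝ), t q.1 + (q.2 : ℕ) * ((1-β)/N))) Finset.univ, ?_, ?_⟩
    · intro p hp
      simp only [Finset.mem_image] at hp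
      obtain ⟨q, -, rfl⟩ := hp
      rw [abs_of_pos hβ0]
      exact ⟨hβ0, hβ1'⟩
    · apply Set.Subset.antisymm
      · intro x hx
        obtain ⟨j, y, hy, rfl⟩ := (memE x).1 hx
        obtain ⟨i, hi, y₀, hy₀, rfl⟩ := split_mem hβ0' hβ1' hy
        by_cases hiN : i < N
        · refine mem_target (Finset.mem_image.2 ⟨(j, ⟨i, hiN⟩), Finset.mem_univ _, rfl⟩)
            ((memE y₀).2 ⟨0, y₀, hy₀, by rw [h0, add_zero]⟩) (by ring)
        · have hicast : ((i:ℕ):ℝ) = N := by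
            exact_mod_cast congrArg (Nat.cast (R := ℝ)) (le_antisymm hi (not_lt.1 hiN))
          have hNN : N - 1 < N := by omega
          have hcast : (((⟨N-1, hNN⟩ : Fin N) : ℕ) : ℝ) = (N:ℝ) - 1 := by
            rw [show ((⟨N-1, hNN⟩ : Fin N) : ℕ) = N - 1 from rfl, Nat.cast_sub hN1]
            norm_num
          refine mem_target (Finset.mem_image.2 ⟨(j, ⟨N-1, hNN⟩), Finset.mem_univ _, rfl⟩)
            ((memE (y₀ + t 1)).2 ⟨1, y₀, hy₀, rfl⟩) ?_
          rw [hcast]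
          linear_combination h1 - ((1-β)/(N:ℝ)) * hicast
      · intro x hx
        obtain ⟨p, hpF, z, hz, rfl⟩ := Set.mem_iUnion₂.1 hx
        obtain ⟨⟨j, i⟩, -, rfl⟩ := Finset.mem_image.1 hpF
        obtain ⟨j', y₀, hy₀, rfl⟩ := (memE z).1 hz
        dsimp only
        have hiN : (i : ℕ) ≤ N := i.isLt.le
        rcases j' with ⟨jv, hjv⟩
        rcases jv with _ | _ | jv
        · refine (memE _).2 ⟨j, β * y₀ + (i:ℕ) * ((1-β)/N),
            prepend hβ0' hβ1' hy₀ hiN, ?_⟩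
          have e0 : (⟨0, hjv⟩ : Fin (1+1)) = 0 := rfl
          rw [e0, h0]; ring
        · refine (memE _).2 ⟨j, β * y₀ + (((i:ℕ) + 1 : ℕ) : ℝ) * ((1-β)/N),
            prepend hβ0' hβ1' hy₀ (by omega), ?_⟩
          have e1 : (⟨1, hjv⟩ : Fin (1+1)) = 1 := rfl
          rw [e1]
          push_cast
          linear_combination -h1
        · omega
  · -- m = 2
    have h0 : t 0 = 0 := by rw [← hts]; simp
    have h1 : β^2 * t 1 = β * ((1-β)/N) := by
      rw [← hts]
      have e : ((1 : Fin (2+1)) : ℕ) = 1 := rfl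
      simp only [e]
      rw [show Finset.Icc 1 1 = {1} from Finset.Icc_self 1, Finset.sum_singleton,
        show β ^ (-(1:ℕ) : ℤ) = β⁻¹ by norm_num]
      field_simp
    have h2 : β^2 * t 2 = (1-β)/N + β * ((1-β)/N) := by
      rw [← hts]
      have e : ((2 : Fin (2+1)) : ℕ) = 2 := rfl
      simp only [e]
      rw [show Finset.Icc 1 2 = ({1, 2} : Finset ℕ) from by decide,
        Finset.sum_insert (by decide), Finset.sum_singleton,
        show β ^ (-(1:ℕ) : ℤ) = β⁻¹ by norm_num,
        show β ^ (-(2:ℕ) : ℤ) = (β^2)⁻¹ by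
          rw [show (-(2:ℕ) : ℤ) = -(2:ℤ) by norm_num, zpow_neg]
          norm_cast]
      have hβ2 : β^2 ≠ 0 := pow_ne_zero 2 hβne
      field_simp
      ring
    refine ⟨(Finset.image (fun q : Fin 3 × Fin N × Fin N =>
        ((β^2 : ℝ), t q.1 + (q.2.1 : ℕ) * ((1-β)/N) + (q.2.2 : ℕ) * (β * ((1-β)/N))))
        Finset.univ)
      ∪ (Finset.image (fun j : Fin 3 =>
        ((-(β^2) : ℝ), t j + N * ((1-β)/N) + β * ((1-β)/N) + β^2)) Finset.univ), ?_, ?_⟩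
    · intro p hp
      have habs : |β^2| = β^2 := abs_of_pos (by positivity)
      have hlt : β^2 < 1 := by nlinarith
      rcases Finset.mem_union.1 hp with hp1 | hp2
      · obtain ⟨q, -, rfl⟩ := Finset.mem_image.1 hp1
        rw [habs]
        exact ⟨by positivity, hlt⟩
      · obtain ⟨q, -, rfl⟩ := Finset.mem_image.1 hp2
        rw [show |(-(β^2), t q + ↑N * ((1-β)/↑N) + β * ((1-β)/↑N) + β^2).1| = β^2 from by
          rw [show (-(β^2), t q + ↑N * ((1-β)/↑N) + β * ((1-β)/↑N) + β^2).1 = -(β^2) from rfl,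
            abs_neg, habs]]
        exact ⟨by positivity, hlt⟩
    · apply Set.Subset.antisymm
      · intro x hx
        obtain ⟨j, y, hy, rfl⟩ := (memE x).1 hx
        obtain ⟨i1, hi1, y1, hy1, rfl⟩ := split_mem hβ0' hβ1' hy
        obtain ⟨i2, hi2, y₀, hy₀, rfl⟩ := split_mem hβ0' hβ1' hy1
        have hNN : N - 1 < N := by omega
        have hcastN : (((⟨N-1, hNN⟩ : Fin N) : ℕ) : ℝ) = (N:ℝ) - 1 := by
          rw [show ((⟨N-1, hNN⟩ : Fin N) : ℕ) = N - 1 from rfl, Nat.cast_sub hN1]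
          norm_num
        by_cases h1N : i1 < N
        · by_cases h2N : i2 < N
          · refine mem_target (Finset.mem_union_left _
              (Finset.mem_image.2 ⟨(j, ⟨i1, h1N⟩, ⟨i2, h2N⟩), Finset.mem_univ _, rfl⟩))
              ((memE y₀).2 ⟨0, y₀, hy₀, by rw [h0, add_zero]⟩) (by ring)
          · have hi2c : ((i2:ℕ):ℝ) = N := by
              exact_mod_cast congrArg (Nat.cast (R := ℝ)) (le_antisymm hi2 (not_lt.1 h2N))
            refine mem_target (Finset.mem_union_left _
              (Finset.mem_image.2 ⟨(j, ⟨i1, h1N⟩, ⟨N-1, hNN⟩), Finset.mem_univ _, rfl⟩))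
              ((memE (y₀ + t 1)).2 ⟨1, y₀, hy₀, rfl⟩) ?_
            rw [hcastN]
            linear_combination h1 - (β*(1-β)/(N:ℝ)) * hi2c
        · have hi1c : ((i1:ℕ):ℝ) = N := by
            exact_mod_cast congrArg (Nat.cast (R := ℝ)) (le_antisymm hi1 (not_lt.1 h1N))
          by_cases h2Z : i2 = 0
          · have hi2c : ((i2:ℕ):ℝ) = 0 := by rw [h2Z]; norm_num
            refine mem_target (Finset.mem_union_right _
              (Finset.mem_image.2 ⟨j, Finset.mem_univ _, rfl⟩))
              ((memE ((1 - y₀) + t 1)).2 ⟨1, 1 - y₀, reflect hN hβ0' hβ1' hy₀, rfl⟩) ?_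
            linear_combination (-1 : ℝ) * h1 - ((1-β)/(N:ℝ)) * hi1c - (β*(1-β)/(N:ℝ)) * hi2c
          · have h2o : 1 ≤ i2 := by omega
            have hII : i2 - 1 < N := by omega
            have hcast2 : (((⟨i2-1, hII⟩ : Fin N) : ℕ) : ℝ) = (i2:ℝ) - 1 := by
              rw [show ((⟨i2-1, hII⟩ : Fin N) : ℕ) = i2 - 1 from rfl, Nat.cast_sub h2o]
              norm_num
            refine mem_target (Finset.mem_union_left _
              (Finset.mem_image.2 ⟨(j, ⟨N-1, hNN⟩, ⟨i2-1, hII⟩), Finset.mem_univ _, rfl⟩))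
              ((memE (y₀ + t 2)).2 ⟨2, y₀, hy₀, rfl⟩) ?_
            rw [hcastN, hcast2]
            linear_combination h2 - ((1-β)/(N:ℝ)) * hi1c
      · intro x hx
        obtain ⟨p, hpF, z, hz, rfl⟩ := Set.mem_iUnion₂.1 hx
        rcases Finset.mem_union.1 hpF with hp1 | hp2
        · obtain ⟨⟨j, i, i'⟩, -, rfl⟩ := Finset.mem_image.1 hp1
          obtain ⟨j', y₀, hy₀, rfl⟩ := (memE z).1 hz
          dsimp only
          have hi : (i : ℕ) ≤ N := i.isLt.le
          have hi' : (i' : ℕ) ≤ N := i'.isLt.le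
          rcases j' with ⟨jv, hjv⟩
          rcases jv with _ | _ | _ | jv
          · refine (memE _).2 ⟨j, β * (β * y₀ + ((i':ℕ):ℝ) * ((1-β)/N)) + ((i:ℕ):ℝ) * ((1-β)/N),
              prepend hβ0' hβ1' (prepend hβ0' hβ1' hy₀ hi') hi, ?_⟩
            rw [show (⟨0, hjv⟩ : Fin (2+1)) = 0 from rfl, h0]; ring
          · refine (memE _).2 ⟨j,
              β * (β * y₀ + ((((i':ℕ)+1 : ℕ)):ℝ) * ((1-β)/N)) + ((i:ℕ):ℝ) * ((1-β)/N),
              prepend hβ0' hβ1' (prepend hβ0' hβ1' hy₀ (by omega)) hi, ?_⟩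
            rw [show (⟨1, hjv⟩ : Fin (2+1)) = 1 from rfl]
            push_cast
            linear_combination (-1:ℝ) * h1
          · refine (memE _).2 ⟨j,
              β * (β * y₀ + ((((i':ℕ)+1 : ℕ)):ℝ) * ((1-β)/N))
                + ((((i:ℕ)+1 : ℕ)):ℝ) * ((1-β)/N),
              prepend hβ0' hβ1' (prepend hβ0' hβ1' hy₀ (by omega)) (by omega), ?_⟩
            rw [show (⟨2, hjv⟩ : Fin (2+1)) = 2 from rfl]
            push_cast
            linear_combination (-1:ℝ) * h2
          · omega
        · obtain ⟨j, -, rfl⟩ := Finset.mem_image.1 hp2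
          obtain ⟨j', y₀, hy₀, rfl⟩ := (memE z).1 hz
          dsimp only
          have hw : (1 - y₀) ∈ Gamma N β := reflect hN hβ0' hβ1' hy₀
          rcases j' with ⟨jv, hjv⟩
          rcases jv with _ | _ | _ | jv
          · refine (memE _).2 ⟨j,
              β * (β * (1 - y₀) + ((1:ℕ):ℝ) * ((1-β)/N)) + ((N:ℕ):ℝ) * ((1-β)/N),
              prepend hβ0' hβ1' (prepend hβ0' hβ1' hw hN1) le_rfl, ?_⟩
            rw [show (⟨0, hjv⟩ : Fin (2+1)) = 0 from rfl, h0]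
            push_cast
            ring
          · refine (memE _).2 ⟨j,
              β * (β * (1 - y₀) + ((0:ℕ):ℝ) * ((1-β)/N)) + ((N:ℕ):ℝ) * ((1-β)/N),
              prepend hβ0' hβ1' (prepend hβ0' hβ1' hw (Nat.zero_le N)) le_rfl, ?_⟩
            rw [show (⟨1, hjv⟩ : Fin (2+1)) = 1 from rfl]
            push_cast
            linear_combination h1
          · refine (memE _).2 ⟨j,
              β * (β * (1 - y₀) + ((0:ℕ):ℝ) * ((1-β)/N)) + (((N-1 : ℕ)):ℝ) * ((1-β)/N),
              prepend hβ0' hβ1' (prepend hβ0' hβ1' hw (Nat.zero_le N)) (Nat.sub_le N 1), ?_⟩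
            rw [show (⟨2, hjv⟩ : Fin (2+1)) = 2 from rfl, Nat.cast_sub hN1]
            push_cast
            linear_combination h2
          · omega

end HSCantor
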